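/- arXiv:2602.17994 — 3 statements merged into one kernel-verified Lean document; each statement's English description precedes it below -/
import Mathlib

section
/- Let q ≥ 2 be an integer, let I be a finite index set, and for each i ∈ I let r_i ∈ ℤ and d_i ∈ ℕ. Assume ∑_{i∈I} r_i = 0. Set m := ∑_{i : d_i odd} r_i and S := ∑_{i∈I} r_i·d_i. Then (q-1)(q²-1) divides ∑_{i∈I} r_i·q^{d_i} if and only if all three of the following hold: (a) (q+1) divides m; (b) (q-1) divides S; (c) m/(q+1) ≡ S/(q-1) (mod 2). -/
/-!
Write `q ^ d = 1 + (q - 1) (d mod 2) + (q² - 1) A_d`, where `A_d ≡ ⌊d/2⌋ (mod q - 1)`.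
Since `∑ rᵢ = 0`, this gives `∑ rᵢ q^{dᵢ} = (q - 1)((q + 1) U + m)` with `U ≡ F (mod q - 1)`,
`F = ∑ rᵢ ⌊dᵢ/2⌋` and `S = 2F + m`. So the divisibility says `q + 1 ∣ m` and, writing
`m = (q + 1) m'`, that `q - 1 ∣ F + m'`; as `S = 2 (F + m') + (q - 1) m'`, the latter is (b) and (c).
-/

theorem exists_pow_eq_add_mod_two_add {R : Type*} [CommRing R] (q : R) (d : ℕ) :
    ∃ A : R, q ^ d = 1 + (q - 1) * ((d % 2 : ℕ) : R) + (q ^ 2 - 1) * A ∧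
      (q - 1) ∣ A - ((d / 2 : ℕ) : R) := by
  induction d using Nat.twoStepInduction with
  | zero => exact ⟨0, by simp⟩
  | one => exact ⟨0, by simp⟩
  | more n ih _ =>
    obtain ⟨A, hA, hAmod⟩ := ih
    -- with `e = n % 2`: `q² (1 + (q - 1) e) = 1 + (q - 1) e + (q² - 1) (1 + (q - 1) e)`
    refine ⟨1 + (q - 1) * ((n % 2 : ℕ) : R) + q ^ 2 * A, ?_, ?_⟩
    · rw [pow_add, hA, Nat.add_mod_right]
      ring
    · have hdiv : (n + 2) / 2 = n / 2 + 1 := by omega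
      rw [hdiv, Nat.cast_succ]
      have hq2 : (q - 1) ∣ q ^ 2 - 1 := ⟨q + 1, by ring⟩
      convert (dvd_mul_right (q - 1) ((n % 2 : ℕ) : R)).add
        ((hq2.mul_right A).add hAmod) using 1
      ring

theorem Finset.sum_filter_odd_eq_sum_mul_mod_two {ι R : Type*} [Semiring R] (s : Finset ι)
    (r : ι → R) (d : ι → ℕ) :
    ∑ i ∈ s.filter (fun i => Odd (d i)), r i = ∑ i ∈ s, r i * ((d i % 2 : ℕ) : R) := by
  rw [Finset.sum_filter]
  refine Finset.sum_congr rfl fun i _ => ?_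
  split_ifs with h
  · simp [Nat.odd_iff.mp h]
  · simp [Nat.even_iff.mp (Nat.not_odd_iff_even.mp h)]

theorem Int.mul_dvd_mul_add_iff {a b u m : ℤ} (hb : b ≠ 0) :
    a * b ∣ b * u + m ↔ b ∣ m ∧ a ∣ u + m / b := by
  by_cases hbm : b ∣ m
  · obtain ⟨m', rfl⟩ := hbm
    rw [Int.mul_ediv_cancel_left _ hb, ← mul_add, mul_comm a, mul_dvd_mul_iff_left hb]
    exact (and_iff_right (dvd_mul_right b m')).symm
  · refine iff_of_false (fun h => hbm ?_) (fun h => hbm h.1)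
    exact (dvd_add_right (dvd_mul_right b u)).mp (dvd_of_mul_left_dvd h)

theorem Int.dvd_iff_dvd_two_mul_add_and_ediv_modEq {n x k : ℤ} (hn : n ≠ 0) :
    n ∣ x ↔ n ∣ 2 * x + n * k ∧ k ≡ (2 * x + n * k) / n [ZMOD 2] := by
  constructor
  · rintro ⟨t, rfl⟩
    have hquot : 2 * (n * t) + n * k = n * (2 * t + k) := by ring
    rw [hquot, Int.mul_ediv_cancel_left _ hn]
    exact ⟨dvd_mul_right n _, Int.modEq_iff_dvd.mpr ⟨t, by ring⟩⟩
  · rintro ⟨⟨s, hs⟩, hmod⟩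
    rw [hs, Int.mul_ediv_cancel_left _ hn] at hmod
    obtain ⟨t, ht⟩ := hmod.dvd
    refine ⟨t, mul_left_cancel₀ two_ne_zero ?_⟩
    linear_combination hs + n * ht

theorem stmt_4 (q : ℤ) (hq : 2 ≤ q) {I : Type*} [Fintype I]
    (r : I → ℤ) (d : I → ℕ) (hsum : ∑ i, r i = 0) :
    ((q - 1) * (q ^ 2 - 1) ∣ ∑ i, r i * q ^ (d i)) ↔
      ((q + 1) ∣ ∑ i ∈ Finset.univ.filter (fun i => Odd (d i)), r i ∧
       (q - 1) ∣ ∑ i, r i * (d i : ℤ) ∧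
       (∑ i ∈ Finset.univ.filter (fun i => Odd (d i)), r i) / (q + 1) ≡
         (∑ i, r i * (d i : ℤ)) / (q - 1) [ZMOD 2]) := by
  choose A hA hAmod using exists_pow_eq_add_mod_two_add q
  rw [Finset.sum_filter_odd_eq_sum_mul_mod_two]
  set m := ∑ i, r i * ((d i % 2 : ℕ) : ℤ)
  set U := ∑ i, r i * A (d i)
  set F := ∑ i, r i * ((d i / 2 : ℕ) : ℤ)
  have hN : ∑ i, r i * q ^ d i = (q - 1) * ((q + 1) * U + m) := by
    have hterm : ∀ i, r i * q ^ d i =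
        r i + (q - 1) * (r i * ((d i % 2 : ℕ) : ℤ)) + (q ^ 2 - 1) * (r i * A (d i)) :=
      fun i => by rw [hA]; ring
    simp only [hterm, Finset.sum_add_distrib, ← Finset.mul_sum, hsum]
    ring
  have hS : ∑ i, r i * (d i : ℤ) = 2 * F + m := by
    have hterm : ∀ i, r i * (d i : ℤ) =
        2 * (r i * ((d i / 2 : ℕ) : ℤ)) + r i * ((d i % 2 : ℕ) : ℤ) :=
      fun i => by rw [← mul_assoc, mul_comm 2, mul_assoc, ← mul_add]; congr 1; omega
    simp only [hterm, Finset.sum_add_distrib, ← Finset.mul_sum]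
    rfl
  have hUF : (q - 1) ∣ U - F := by
    rw [← Finset.sum_sub_distrib]
    exact Finset.dvd_sum fun i _ => by rw [← mul_sub]; exact (hAmod (d i)).mul_left (r i)
  rw [hN, show (q - 1) * (q ^ 2 - 1) = (q - 1) * ((q - 1) * (q + 1)) by ring,
    mul_dvd_mul_iff_left (by omega), Int.mul_dvd_mul_add_iff (by omega)]
  refine and_congr_right fun ⟨m', hm'⟩ => ?_
  rw [hS, hm', Int.mul_ediv_cancel_left _ (by omega),
    show U + m' = (U - F) + (F + m') by ring, dvd_add_right hUF,
    show 2 * F + (q + 1) * m' = 2 * (F + m') + (q - 1) * m' by ring]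
  exact Int.dvd_iff_dvd_two_mul_add_and_ediv_modEq (by omega)
end

section
/- Let q ≥ 2 be an integer, let I be a finite index set, let D ∈ ℕ, and for each i ∈ I let r_i ∈ ℤ and d_i ∈ ℕ with d_i ≤ D. Assume ∑_{i∈I} r_i = 0. Then (q-1)(q²-1) divides ∑_{i∈I} r_i·q^{d_i} if and only if (q-1)(q²-1) divides ∑_{i∈I} r_i·q^{D - d_i}. -/
private def cc (q : ℤ) (d : ℕ) : ℤ := (q + 1) * ((d / 2 : ℕ) : ℤ) + ((d % 2 : ℕ) : ℤ)

private lemma L1 (q : ℤ) : ∀ d : ℕ, (q - 1) * (q ^ 2 - 1) ∣ q ^ d - 1 - (q - 1) * cc q d := by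
  intro d
  induction d using Nat.twoStepInduction with
  | zero => simp [cc]
  | one => simp [cc]
  | more n ih _ =>
    have h2 : cc q (n + 2) = cc q n + (q + 1) := by
      have e1 : (n + 2) / 2 = n / 2 + 1 := by omega
      have e2 : (n + 2) % 2 = n % 2 := by omega
      simp [cc, e1, e2]; ring
    have hgeo : (q - 1) ∣ q ^ n - 1 := by
      simpa using sub_dvd_pow_sub_pow q 1 n
    obtain ⟨k, hk⟩ := hgeo
    have : q ^ (n + 2) - 1 - (q - 1) * cc q (n + 2)
        = (q ^ n - 1 - (q - 1) * cc q n) + (q - 1) * (q ^ 2 - 1) * k := by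
      rw [h2]
      have : q ^ (n + 2) = q ^ n * q ^ 2 := by ring
      rw [this]
      nlinarith [hk]
    rw [this]
    exact dvd_add ih ⟨k, rfl⟩

private lemma codd (q : ℤ) (D d : ℕ) (hd : d ≤ D) (hD : D % 2 = 1) :
    cc q (D - d) = ((q + 1) * ((D / 2 : ℕ) : ℤ) + 1) - cc q d := by
  have h1 : (D - d) / 2 + d / 2 = D / 2 := by omega
  have h2 : (D - d) % 2 + d % 2 = 1 := by omega
  have h1' : (((D - d) / 2 : ℕ) : ℤ) = ((D / 2 : ℕ) : ℤ) - ((d / 2 : ℕ) : ℤ) := by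
    omega
  have h2' : (((D - d) % 2 : ℕ) : ℤ) = 1 - ((d % 2 : ℕ) : ℤ) := by
    omega
  simp only [cc, h1', h2']; ring

private lemma ceven (q : ℤ) (D d : ℕ) (hd : d ≤ D) (hD : D % 2 = 0) :
    cc q (D - d) = (q + 1) * ((D / 2 : ℕ) : ℤ) - q * cc q d + (q ^ 2 - 1) * ((d / 2 : ℕ) : ℤ) := by
  have h1 : (D - d) / 2 + d / 2 + d % 2 = D / 2 := by omega
  have h2 : (D - d) % 2 = d % 2 := by omega
  have h1' : (((D - d) / 2 : ℕ) : ℤ)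
      = ((D / 2 : ℕ) : ℤ) - ((d / 2 : ℕ) : ℤ) - ((d % 2 : ℕ) : ℤ) := by
    omega
  have h2' : (((D - d) % 2 : ℕ) : ℤ) = ((d % 2 : ℕ) : ℤ) := by rw [h2]
  simp only [cc, h1', h2']; ring

private lemma dir (q : ℤ) {I : Type*} [Fintype I] (r : I → ℤ) (d : I → ℕ) (D : ℕ)
    (hD : ∀ i, d i ≤ D) (hsum : ∑ i, r i = 0)
    (h : (q ^ 2 - 1) ∣ ∑ i, r i * cc q (d i)) :
    (q ^ 2 - 1) ∣ ∑ i, r i * cc q (D - d i) := by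
  rcases Nat.even_or_odd D with hE | hO
  · have hE' : D % 2 = 0 := Nat.even_iff.mp hE
    have hpt : ∀ i, r i * cc q (D - d i)
        = ((q + 1) * ((D / 2 : ℕ) : ℤ)) * r i
          - q * (r i * cc q (d i)) + (q ^ 2 - 1) * (r i * ((d i / 2 : ℕ) : ℤ)) := by
      intro i; rw [ceven q D (d i) (hD i) hE']; ring
    rw [Finset.sum_congr rfl (fun i _ => hpt i)]
    rw [Finset.sum_add_distrib, Finset.sum_sub_distrib, ← Finset.mul_sum, ← Finset.mul_sum,
      ← Finset.mul_sum, hsum, mul_zero, zero_sub]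
    exact dvd_add (dvd_neg.mpr (h.mul_left q)) (Dvd.intro _ rfl)
  · have hO' : D % 2 = 1 := Nat.odd_iff.mp hO
    have hpt : ∀ i, r i * cc q (D - d i)
        = ((q + 1) * ((D / 2 : ℕ) : ℤ) + 1) * r i - r i * cc q (d i) := by
      intro i; rw [codd q D (d i) (hD i) hO']; ring
    rw [Finset.sum_congr rfl (fun i _ => hpt i)]
    rw [Finset.sum_sub_distrib, ← Finset.mul_sum, hsum, mul_zero, zero_sub]
    exact dvd_neg.mpr h

private lemma red (q : ℤ) (hq : 2 ≤ q) {I : Type*} [Fintype I] (r : I → ℤ) (e : I → ℕ)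
    (hsum : ∑ i, r i = 0) :
    ((q - 1) * (q ^ 2 - 1) ∣ ∑ i, r i * q ^ (e i)) ↔
    ((q ^ 2 - 1) ∣ ∑ i, r i * cc q (e i)) := by
  have hkey : (∑ i, r i * q ^ (e i)) - (q - 1) * ∑ i, r i * cc q (e i)
      = ∑ i, r i * (q ^ (e i) - 1 - (q - 1) * cc q (e i)) := by
    rw [Finset.mul_sum, ← Finset.sum_sub_distrib]
    have e1 : ∀ i ∈ Finset.univ, r i * q ^ (e i) - (q - 1) * (r i * cc q (e i))
        = r i * (q ^ (e i) - 1 - (q - 1) * cc q (e i)) + r i := fun i _ => by ring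
    rw [Finset.sum_congr rfl e1, Finset.sum_add_distrib, hsum, add_zero]
  have hdv : (q - 1) * (q ^ 2 - 1) ∣
      (∑ i, r i * q ^ (e i)) - (q - 1) * ∑ i, r i * cc q (e i) := by
    rw [hkey]
    exact Finset.dvd_sum fun i _ => (L1 q (e i)).mul_left (r i)
  have h0 : q - 1 ≠ 0 := by omega
  constructor
  · intro h
    have h2 : (q - 1) * (q ^ 2 - 1) ∣ (q - 1) * ∑ i, r i * cc q (e i) := by
      have := h.sub hdv; simpa using this
    exact (mul_dvd_mul_iff_left h0).mp h2
  · intro h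
    have h2 : (q - 1) * (q ^ 2 - 1) ∣ (q - 1) * ∑ i, r i * cc q (e i) :=
      (mul_dvd_mul_iff_left h0).mpr h
    have := hdv.add h2; simpa using this

theorem stmt_5 (q : ℤ) (hq : 2 ≤ q) {I : Type*} [Fintype I]
    (r : I → ℤ) (d : I → ℕ) (D : ℕ) (hD : ∀ i, d i ≤ D)
    (hsum : ∑ i, r i = 0) :
    ((q - 1) * (q ^ 2 - 1) ∣ ∑ i, r i * q ^ (d i)) ↔
    ((q - 1) * (q ^ 2 - 1) ∣ ∑ i, r i * q ^ (D - d i)) := by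
  rw [red q hq r d hsum, red q hq r (fun i => D - d i) hsum]
  constructor
  · exact dir q r d D hD hsum
  · intro h
    have h2 := dir q r (fun i => D - d i) D (fun i => Nat.sub_le D (d i)) hsum h
    have : ∀ i ∈ Finset.univ, r i * cc q (D - (D - d i)) = r i * cc q (d i) := by
      intro i _; rw [Nat.sub_sub_self (hD i)]
    rwa [Finset.sum_congr rfl this] at h2
end

section
/- Let q ≥ 2 be an integer, I a finite index set, and for each i ∈ I let r_i ∈ ℤ and d_i ∈ ℕ. Assume ∑_{i∈I} r_i = 0 and that (q-1)(q²-1) divides ∑_{i∈I} r_i·q^{d_i}. Then (q+1) divides ∑_{i : d_i odd} r_i, and (q-1) divides ∑_{i∈I} r_i·d_i. -/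
theorem stmt_15 (q : ℤ) (hq : 2 ≤ q) {I : Type*} [Fintype I]
    (r : I → ℤ) (d : I → ℕ) (hsum : ∑ i, r i = 0)
    (hdvd : (q - 1) * (q ^ 2 - 1) ∣ ∑ i, r i * q ^ (d i)) :
    (q + 1) ∣ ∑ i ∈ Finset.univ.filter (fun i => Odd (d i)), r i ∧
    (q - 1) ∣ ∑ i, r i * (d i : ℤ) := by
  have hq1 : q - 1 ≠ 0 := by omega
  -- termwise lemma mod q^2 - 1
  have L1 : ∀ n : ℕ, (q ^ 2 - 1) ∣ q ^ n - (if Odd n then q else 1) := by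
    intro n
    rcases Nat.even_or_odd n with ⟨k, hk⟩ | ⟨k, hk⟩
    · have hn : ¬ Odd n := by simp [Nat.not_odd_iff_even]; exact ⟨k, hk⟩
      have h1 : (q ^ 2 - 1) ∣ (q ^ 2) ^ k - 1 ^ k := sub_dvd_pow_sub_pow _ _ _
      have h2 : (q ^ 2) ^ k = q ^ n := by rw [← pow_mul]; congr 1; omega
      simpa [hn, h2] using h1
    · have hn : Odd n := ⟨k, hk⟩
      have h1 : (q ^ 2 - 1) ∣ (q ^ 2) ^ k - 1 ^ k := sub_dvd_pow_sub_pow _ _ _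
      have h2 : q * ((q ^ 2) ^ k - 1 ^ k) = q ^ n - q := by
        rw [hk]; rw [← pow_mul]; ring
      rw [if_pos hn, ← h2]
      exact h1.mul_left q
  -- termwise lemma mod (q-1)^2
  have L2 : ∀ n : ℕ, (q - 1) ^ 2 ∣ q ^ n - 1 - (q - 1) * n := by
    intro n
    induction n with
    | zero => simp
    | succ m ih =>
      have h : q ^ (m + 1) - 1 - (q - 1) * ((m : ℤ) + 1)
          = q * (q ^ m - 1 - (q - 1) * m) + (q - 1) ^ 2 * m := by ring
      push_cast
      rw [h]
      exact dvd_add (ih.mul_left q) (dvd_mul_right _ _)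
  have hdvd2 : (q ^ 2 - 1) ∣ ∑ i, r i * q ^ d i :=
    dvd_trans ⟨q - 1, by ring⟩ hdvd
  have hdvd3 : (q - 1) ^ 2 ∣ ∑ i, r i * q ^ d i :=
    dvd_trans ⟨q + 1, by ring⟩ hdvd
  set S := ∑ i ∈ Finset.univ.filter (fun i => Odd (d i)), r i with hS
  constructor
  · have key1 : (q ^ 2 - 1) ∣ (∑ i, r i * q ^ d i) - ∑ i, r i * (if Odd (d i) then q else 1) := by
      rw [← Finset.sum_sub_distrib]
      refine Finset.dvd_sum fun i _ => ?_
      rw [← mul_sub]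
      exact (L1 (d i)).mul_left _
    have hsplit : ∑ i, r i * (if Odd (d i) then q else 1) = (q - 1) * S + ∑ i, r i := by
      rw [hS, Finset.mul_sum, Finset.sum_filter, ← Finset.sum_add_distrib]
      refine Finset.sum_congr rfl fun i _ => ?_
      split <;> ring
    rw [hsplit, hsum, add_zero] at key1
    have : (q ^ 2 - 1) ∣ (q - 1) * S := (dvd_sub_right hdvd2).mp key1
    have h2 : (q - 1) * (q + 1) ∣ (q - 1) * S := by
      have heq : q ^ 2 - 1 = (q - 1) * (q + 1) := by ring
      rwa [heq] at this
    exact (mul_dvd_mul_iff_left hq1).mp h2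
  · have key2 : (q - 1) ^ 2 ∣ ∑ i, r i * (q ^ d i - 1 - (q - 1) * (d i : ℤ)) := by
      refine Finset.dvd_sum fun i _ => ?_
      exact (L2 (d i)).mul_left _
    have hexp : ∑ i, r i * (q ^ d i - 1 - (q - 1) * (d i : ℤ))
        = (∑ i, r i * q ^ d i) - (∑ i, r i) - (q - 1) * ∑ i, r i * (d i : ℤ) := by
      rw [Finset.mul_sum, ← Finset.sum_sub_distrib, ← Finset.sum_sub_distrib]
      refine Finset.sum_congr rfl fun i _ => ?_
      ring
    rw [hexp, hsum, sub_zero] at key2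
    have : (q - 1) ^ 2 ∣ (q - 1) * ∑ i, r i * (d i : ℤ) :=
      (dvd_sub_right hdvd3).mp key2
    have h2 : (q - 1) * (q - 1) ∣ (q - 1) * ∑ i, r i * (d i : ℤ) := by
      rwa [← sq]
    exact (mul_dvd_mul_iff_left hq1).mp h2
end
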